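/- arXiv:2010.05513 — 3 statements merged into one kernel-verified Lean document; each statement's English description precedes it below -/
import Mathlib

section
/- Let A and B be unital C*-algebras and Φ : A → B a unital linear map which is 2-positive, meaning that the induced map on 2×2 matrices over A, sending (a_{ij})_{i,j=1,2} to (Φ(a_{ij}))_{i,j=1,2}, maps positive elements of M_2(A) to positive elements of M_2(B). Then Φ satisfies the Kadison–Schwarz inequality: Φ(a)* Φ(a) ≤ Φ(a* a) for every a ∈ A. -/
/-!
Apply 2-positivity to `!![1, a; a*, a* a] = !![1, a; 0, 0]* !![1, a; 0, 0]`: the image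
`!![1, Φ a; Φ(a)*, Φ(a* a)]` is positive, and compressing it by the column `(Φ a, -1)` leaves
the nonnegative entry `Φ(a* a) - Φ(a)* Φ(a)`.
-/

namespace Matrix

theorem map_fin_two {α β : Type*} (f : α → β) (p q r s : α) :
    (!![p, q; r, s]).map f = !![f p, f q; f r, f s] := by
  simp [← Matrix.ext_iff, Fin.forall_fin_two]

variable {R : Type*} [Ring R] [StarRing R]

theorem star_mul_self_of_top_row (x y : R) :
    star !![x, y; 0, 0] * !![x, y; 0, 0] =
      !![star x * x, star x * y; star y * x, star y * y] := by
  simp [← Matrix.ext_iff, Fin.forall_fin_two, mul_apply, star_apply]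

theorem PosSemidef.star_mul_self_le_of_fin_two [PartialOrder R] [StarOrderedRing R] {b c : R}
    (h : PosSemidef !![1, b; star b, c]) : star b * b ≤ c := by
  have h₀₀ := (h.conjTranspose_mul_mul_same !![b; -1]).diag_nonneg (i := 0)
  simpa [mul_apply, Fin.sum_univ_two, ← sub_eq_add_neg] using h₀₀

end Matrix

open Matrix in
/-- A unital 2-positive linear map between unital C*-algebras satisfies the
Kadison–Schwarz inequality `Φ(a)* Φ(a) ≤ Φ(a* a)`.  2-positivity is expressed via the
entrywise-induced map on `2×2` matrices, positivity of a matrix `x` over a C*-algebra being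
`∃ y, x = star y * y`. -/
theorem kadison_schwarz_of_two_positive
    {A B : Type*} [CStarAlgebra A] [CStarAlgebra B]
    [PartialOrder B] [StarOrderedRing B]
    (Φ : A →ₗ[ℂ] B) (hunital : Φ 1 = 1)
    (h2pos : ∀ M : Matrix (Fin 2) (Fin 2) A, (∃ y, M = star y * y) →
      ∃ z : Matrix (Fin 2) (Fin 2) B, M.map Φ = star z * z) :
    ∀ a : A, star (Φ a) * Φ a ≤ Φ (star a * a) := by
  intro a
  obtain ⟨z, hz⟩ := h2pos !![1, a; star a, star a * a]
    ⟨!![1, a; 0, 0], by simp [star_mul_self_of_top_row]⟩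
  have hpos : PosSemidef !![1, Φ a; Φ (star a), Φ (star a * a)] := by
    rw [← hunital, ← map_fin_two, hz, star_eq_conjTranspose]
    exact posSemidef_conjTranspose_mul_self z
  have hstar : Φ (star a) = star (Φ a) := by
    simpa using (hpos.isHermitian.apply 1 0).symm
  rw [hstar] at hpos
  exact hpos.star_mul_self_le_of_fin_two
end

section
/- (Löwner–Heinz) Let A and B be positive bounded operators on a complex Hilbert space with A ≤ B. Then for every α ∈ [0,1], A^α ≤ B^α, where the powers are defined by the continuous functional calculus. -/
/-- **Löwner–Heinz inequality.** If `A ≤ B` are positive bounded operators on a complex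
Hilbert space, then `A^α ≤ B^α` for every `α ∈ [0,1]`, powers being given by the
continuous functional calculus.  `S ≤ T` is expressed as `(T - S).IsPositive`. -/
theorem loewner_heinz
    {H : Type*} [NormedAddCommGroup H] [InnerProductSpace ℂ H] [CompleteSpace H]
    (A B : H →L[ℂ] H) (hA : A.IsPositive) (hB : B.IsPositive)
    (hAB : (B - A).IsPositive)
    (α : ℝ) (hα0 : 0 ≤ α) (hα1 : α ≤ 1) :
    (cfc (fun x : ℝ => x ^ α) B - cfc (fun x : ℝ => x ^ α) A).IsPositive := by
  rw [← CFC.rpow_eq_cfc_real (A.nonneg_iff_isPositive.mpr hA),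
    ← CFC.rpow_eq_cfc_real (B.nonneg_iff_isPositive.mpr hB), ← ContinuousLinearMap.le_def]
  exact CFC.rpow_le_rpow ⟨hα0, hα1⟩ ((A.le_def B).mpr hAB)
end

section
/- Let H and K be complex Hilbert spaces, A a positive bounded operator on H, B a positive bounded invertible operator on K, and V : K → H a bounded linear operator with ‖V‖ ≤ 1 such that V* A V ≤ B. Then for every α ∈ [0,1]: (i) V* A^α V ≤ B^α, and (ii) the operator A^{α/2} V B^{−α/2} : K → H satisfies ‖A^{α/2} V B^{−α/2}‖ ≤ 1. -/
/-!
Put `T t = A ^ (t / 2) ∘ V ∘ B ^ (-(t / 2))`. Conjugating by `B ^ (-(t / 2))` shows that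
`V* A^t V ≤ B^t` is equivalent to `‖T t‖ ≤ 1`; this holds at `t = 0` (where `T 0 = V`) and, by
hypothesis, at `t = 1`. It is also stable under midpoints: with `m = (s + t) / 2`, the operator
`T s* T t` is similar to `T m* T m` via `B ^ ((t - s) / 4)`, so
`‖T m‖² = r(T m* T m) = r(T s* T t) ≤ ‖T s‖ ‖T t‖`. Hence `‖T t‖ ≤ 1` at all dyadic points of
`[0, 1]`, and then everywhere on `[0, 1]` because `t ↦ T t` is norm-continuous for `t > 0`.
-/

open Filter Topology Set
open scoped NNReal

lemma natCast_div_two_pow_mem_of_midpoint_mem {S : Set ℝ} (h₀ : 0 ∈ S) (h₁ : 1 ∈ S)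
    (hmid : ∀ s ∈ S, ∀ t ∈ S, (s + t) / 2 ∈ S) (n k : ℕ) (hk : k ≤ 2 ^ n) :
    (k : ℝ) / 2 ^ n ∈ S := by
  induction n generalizing k with
  | zero =>
    interval_cases k <;> simpa
  | succ n ih =>
    obtain ⟨j, rfl | rfl⟩ := Nat.even_or_odd' k
    · convert ih j (by omega) using 1
      push_cast; ring
    · convert hmid _ (ih j (by omega)) _ (ih (j + 1) (by omega)) using 1
      push_cast; ring

lemma le_of_midpoint_le {f : ℝ → ℝ} {c : ℝ} (hf : ContinuousOn f (Ioc 0 1)) (h₀ : f 0 ≤ c)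
    (h₁ : f 1 ≤ c) (hmid : ∀ s ∈ Icc (0 : ℝ) 1, ∀ t ∈ Icc (0 : ℝ) 1,
      f s ≤ c → f t ≤ c → f ((s + t) / 2) ≤ c) {x : ℝ} (hx : x ∈ Icc (0 : ℝ) 1) : f x ≤ c := by
  have hdyadic := natCast_div_two_pow_mem_of_midpoint_mem (S := {t ∈ Icc 0 1 | f t ≤ c})
    ⟨⟨le_rfl, zero_le_one⟩, h₀⟩ ⟨⟨zero_le_one, le_rfl⟩, h₁⟩
    (fun s hs t ht => ⟨⟨by linarith [hs.1.1, ht.1.1], by linarith [hs.1.2, ht.1.2]⟩,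
      hmid s hs.1 t ht.1 hs.2 ht.2⟩)
  obtain rfl | hx₀ := hx.1.eq_or_lt
  · exact h₀
  set a : ℕ → ℝ := fun n => (⌊x * 2 ^ n⌋₊ : ℝ) / 2 ^ n
  have ha : Tendsto a atTop (𝓝 x) :=
    (tendsto_nat_floor_mul_div_atTop hx.1).comp (tendsto_pow_atTop_atTop_of_one_lt one_lt_two)
  have ha_le : ∀ n, a n ≤ x := fun n =>
    div_le_of_le_mul₀ (by positivity) hx.1 (Nat.floor_le (mul_nonneg hx.1 (by positivity)))
  have hfloor : ∀ n, ⌊x * 2 ^ n⌋₊ ≤ 2 ^ n := fun n =>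
    Nat.floor_le_of_le (by simpa using mul_le_of_le_one_left (pow_nonneg zero_le_two n) hx.2)
  have ha_mem : ∀ᶠ n in atTop, a n ∈ Ioc 0 1 := by
    filter_upwards [ha.eventually (lt_mem_nhds hx₀)] with n hn
    exact ⟨hn, (ha_le n).trans hx.2⟩
  refine le_of_tendsto ((hf x ⟨hx₀, hx.2⟩).tendsto.comp (tendsto_nhdsWithin_iff.2 ⟨ha, ha_mem⟩))
    (Eventually.of_forall fun n => ?_)
  exact (hdyadic n _ (hfloor n)).2

namespace CFC

variable {A : Type*} [CStarAlgebra A] [PartialOrder A] [StarOrderedRing A]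

lemma rpow_add_of_exponent_nonneg (a : A) {x y : ℝ} (hx : 0 ≤ x) (hy : 0 ≤ y) :
    a ^ (x + y) = a ^ x * a ^ y := by
  simp only [rpow_def]
  rw [← cfc_mul _ _ a]
  exact cfc_congr fun z _ => NNReal.rpow_add_of_nonneg z hx hy

open scoped ContinuousFunctionalCalculus in
lemma continuousAt_rpow_exponent (a : A) {t₀ : ℝ} (h : 0 < t₀ ∨ IsUnit a) :
    ContinuousAt (fun t : ℝ => a ^ t) t₀ := by
  set U : Set ℝ := {t | 0 < t ∨ IsUnit a}
  have hU : IsOpen U := by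
    by_cases ha : IsUnit a
    · simp [U, ha]
    · simpa [U, ha] using isOpen_lt continuous_const continuous_id
  have hcont : ∀ t ∈ U, ∀ x ∈ spectrum ℝ≥0 a,
      ContinuousAt (fun p : ℝ × ℝ≥0 => p.2 ^ p.1) (t, x) := by
    intro t ht x hx
    have : x ≠ 0 ∨ 0 < t :=
      ht.symm.imp_left fun hu hx0 => spectrum.zero_notMem ℝ≥0 hu (hx0 ▸ hx)
    exact (NNReal.continuousAt_rpow this).comp (x := (t, x)) continuous_swap.continuousAt
  refine continuousAt_cfc_fun ?_ ?_
  · rw [tendstoUniformlyOn_iff_tendstoUniformly_comp_coe]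
    refine ContinuousOn.tendstoUniformly (hU.mem_nhds h) ?_
    rintro ⟨t, x⟩ ⟨ht, -⟩
    exact ContinuousAt.continuousWithinAt <| (hcont t ht x x.2).comp
      (f := fun p : ℝ × spectrum ℝ≥0 a => (p.1, (p.2 : ℝ≥0))) (x := (t, x)) (by fun_prop)
  · filter_upwards [hU.mem_nhds h] with t ht x hx
    exact ((hcont t ht x hx).comp (x := x) (by fun_prop)).continuousWithinAt

end CFC

lemma IsUnit.star_left_conjugate_le_conjugate_iff {R : Type*} [Ring R] [StarRing R]
    [PartialOrder R] [StarOrderedRing R] {u : R} (hu : IsUnit u) {a b : R} :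
    star u * a * u ≤ star u * b * u ↔ a ≤ b := by
  rw [← sub_nonneg, ← sub_mul, ← mul_sub, hu.star_left_conjugate_nonneg_iff, sub_nonneg]

namespace ContractionPowerBound

open ContinuousLinearMap

variable {H K : Type*} [NormedAddCommGroup H] [InnerProductSpace ℂ H] [CompleteSpace H]
  [NormedAddCommGroup K] [InnerProductSpace ℂ K] [CompleteSpace K]

lemma norm_le_one_iff_adjoint_comp_self_le_one (T : K →L[ℂ] H) :
    ‖T‖ ≤ 1 ↔ adjoint T ∘L T ≤ 1 := by
  rw [← CStarAlgebra.norm_le_one_iff_of_nonneg _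
      ((nonneg_iff_isPositive _).mpr T.isPositive_adjoint_comp_self),
    norm_adjoint_comp_self, ← abs_le_one_iff_mul_self_le_one, abs_norm]

lemma adjoint_rpow (A : H →L[ℂ] H) (t : ℝ) : adjoint (A ^ t) = A ^ t := by
  rw [← star_eq_adjoint, (IsSelfAdjoint.of_nonneg CFC.rpow_nonneg).star_eq]

noncomputable def interpolant (V : K →L[ℂ] H) (A : H →L[ℂ] H) (B : K →L[ℂ] K) (t : ℝ) :
    K →L[ℂ] H :=
  (A ^ (t / 2)) ∘L V ∘L (B ^ (-(t / 2)))

variable {V : K →L[ℂ] H} {A : H →L[ℂ] H} {B : K →L[ℂ] K}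

lemma adjoint_interpolant_comp_interpolant {s t : ℝ} (hs : 0 ≤ s) (ht : 0 ≤ t) :
    adjoint (interpolant V A B s) ∘L interpolant V A B t
      = B ^ (-(s / 2)) * (adjoint V ∘L (A ^ ((s + t) / 2)) ∘L V) * B ^ (-(t / 2)) := by
  rw [interpolant, interpolant, adjoint_comp, adjoint_comp, adjoint_rpow, adjoint_rpow,
    add_div, CFC.rpow_add_of_exponent_nonneg A (by positivity) (by positivity)]
  simp only [mul_def, comp_assoc]

lemma le_rpow_iff_norm_interpolant_le_one (hB : IsStrictlyPositive B) {t : ℝ} (ht : 0 ≤ t) :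
    adjoint V ∘L (A ^ t) ∘L V ≤ B ^ t ↔ ‖interpolant V A B t‖ ≤ 1 := by
  have hinv : B ^ (-(t / 2)) * B ^ t * B ^ (-(t / 2)) = 1 := by
    rw [← CFC.rpow_add hB.isUnit, ← CFC.rpow_add hB.isUnit,
      show -(t / 2) + t + -(t / 2) = 0 by ring, CFC.rpow_zero B]
  have hconj := (hB.isUnit.cfcRpow (-(t / 2))).star_left_conjugate_le_conjugate_iff
    (a := adjoint V ∘L (A ^ t) ∘L V) (b := B ^ t)
  rw [(IsSelfAdjoint.of_nonneg CFC.rpow_nonneg).star_eq, hinv] at hconj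
  rw [norm_le_one_iff_adjoint_comp_self_le_one, adjoint_interpolant_comp_interpolant ht ht,
    add_self_div_two, hconj]

lemma norm_interpolant_midpoint_le_one (hB : IsStrictlyPositive B) {s t : ℝ}
    (hs : 0 ≤ s) (ht : 0 ≤ t) (hTs : ‖interpolant V A B s‖ ≤ 1)
    (hTt : ‖interpolant V A B t‖ ≤ 1) : ‖interpolant V A B ((s + t) / 2)‖ ≤ 1 := by
  -- `spectralRadius_le_nnnorm` needs `‖(1 : K →L[ℂ] K)‖ = 1`
  nontriviality K
  set m := (s + t) / 2
  set T := interpolant V A B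
  let u : (K →L[ℂ] K)ˣ := hB.isUnit.unit.cfcRpow ((t - s) / 4)
  have hconj : adjoint (T s) ∘L T t = u * (adjoint (T m) ∘L T m) * ↑u⁻¹ := by
    rw [adjoint_interpolant_comp_interpolant hs ht, adjoint_interpolant_comp_interpolant
      (by positivity) (by positivity), add_self_div_two]
    change _ = B ^ ((t - s) / 4) * _ * B ^ (-((t - s) / 4))
    have e₁ : B ^ ((t - s) / 4) * B ^ (-(m / 2)) = B ^ (-(s / 2)) := by
      rw [← CFC.rpow_add hB.isUnit]; congr 1; ring
    have e₂ : B ^ (-(m / 2)) * B ^ (-((t - s) / 4)) = B ^ (-(t / 2)) := by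
      rw [← CFC.rpow_add hB.isUnit]; congr 1; ring
    rw [← e₁, ← e₂]
    simp only [m, mul_assoc]
  have hsq : ‖adjoint (T m) ∘L T m‖₊ ≤ ‖adjoint (T s) ∘L T t‖₊ := by
    rw [← ENNReal.coe_le_coe,
      ← (isPositive_adjoint_comp_self _).isSelfAdjoint.spectralRadius_eq_nnnorm, spectralRadius,
      ← spectrum.units_conjugate (u := u), ← hconj]
    exact spectrum.spectralRadius_le_nnnorm _
  rw [← abs_norm, abs_le_one_iff_mul_self_le_one, ← norm_adjoint_comp_self]
  calc _ ≤ ‖adjoint (T s) ∘L T t‖ := hsq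
    _ ≤ ‖adjoint (T s)‖ * ‖T t‖ := opNorm_comp_le _ _
    _ ≤ 1 := by rw [LinearIsometryEquiv.norm_map]; exact mul_le_one₀ hTs (norm_nonneg _) hTt

lemma interpolant_zero (hA : 0 ≤ A) (hB : 0 ≤ B) : interpolant V A B 0 = V := by
  simp [interpolant, CFC.rpow_zero A, CFC.rpow_zero B, one_def]

lemma continuousAt_interpolant (hB : IsUnit B) {t : ℝ} (ht : 0 < t) :
    ContinuousAt (interpolant V A B) t := by
  have hApow : ContinuousAt (fun u : ℝ => A ^ (u / 2)) t :=
    (CFC.continuousAt_rpow_exponent A (.inl (half_pos ht))).comp (x := t)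
      (continuousAt_id.div_const 2)
  have hBpow : ContinuousAt (fun u : ℝ => B ^ (-(u / 2))) t :=
    (CFC.continuousAt_rpow_exponent B (.inr hB)).comp (x := t)
      (continuousAt_id.div_const 2).neg
  exact hApow.clm_comp (continuousAt_const.clm_comp hBpow)

end ContractionPowerBound

open ContractionPowerBound in
/-- Bounded-operator form of Lemma 3 of the paper: if `V : K → H` is a contraction, `A` is a
positive bounded operator on `H`, `B` a positive invertible bounded operator on `K` and
`V* A V ≤ B`, then for `α ∈ [0,1]` one has `V* A^α V ≤ B^α` and
`‖A^{α/2} V B^{-α/2}‖ ≤ 1`, powers being given by the continuous functional calculus.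
`S ≤ T` is expressed as `(T - S).IsPositive`. -/
theorem contraction_power_bound
    {H K : Type*} [NormedAddCommGroup H] [InnerProductSpace ℂ H] [CompleteSpace H]
    [NormedAddCommGroup K] [InnerProductSpace ℂ K] [CompleteSpace K]
    (V : K →L[ℂ] H) (hV : ‖V‖ ≤ 1)
    (A : H →L[ℂ] H) (hA : A.IsPositive)
    (B : K →L[ℂ] K) (hB : B.IsPositive) (hBinv : IsUnit B)
    (hVAB : (B - ContinuousLinearMap.adjoint V ∘L A ∘L V).IsPositive)
    (α : ℝ) (hα0 : 0 ≤ α) (hα1 : α ≤ 1) :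
    (cfc (fun x : ℝ => x ^ α) B
        - ContinuousLinearMap.adjoint V ∘L cfc (fun x : ℝ => x ^ α) A ∘L V).IsPositive ∧
      ‖cfc (fun x : ℝ => x ^ (α / 2)) A ∘L V ∘L cfc (fun x : ℝ => x ^ (-(α / 2))) B‖ ≤ 1 := by
  have hA₀ : 0 ≤ A := (ContinuousLinearMap.nonneg_iff_isPositive A).mpr hA
  have hB₀ : IsStrictlyPositive B :=
    hBinv.isStrictlyPositive ((ContinuousLinearMap.nonneg_iff_isPositive B).mpr hB)
  simp only [← CFC.rpow_eq_cfc_real hA₀, ← CFC.rpow_eq_cfc_real hB₀.nonneg,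
    ← ContinuousLinearMap.le_def]
  have hT₁ : ‖interpolant V A B 1‖ ≤ 1 := by
    rwa [← le_rpow_iff_norm_interpolant_le_one hB₀ zero_le_one, CFC.rpow_one A, CFC.rpow_one B,
      ContinuousLinearMap.le_def]
  have hT : ‖interpolant V A B α‖ ≤ 1 :=
    le_of_midpoint_le (f := fun t => ‖interpolant V A B t‖)
      (fun t ht => (continuousAt_interpolant hBinv ht.1).norm.continuousWithinAt)
      (by rwa [interpolant_zero hA₀ hB₀.nonneg]) hT₁
      (fun s hs t ht => norm_interpolant_midpoint_le_one hB₀ hs.1 ht.1) ⟨hα0, hα1⟩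
  exact ⟨(le_rpow_iff_norm_interpolant_le_one hB₀ hα0).mpr hT, hT⟩
end
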